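/- arXiv:2208.07457 — 2 statements merged into one kernel-verified Lean document; each statement's English description precedes it below -/
import Mathlib

section
/- Let G : 2^{V∪V̄} → ℝ be submodular, non-negative, with G(∅) = 0, G(V∪V̄) = 0, and min_{T⊆V̄} G(T) = 0. Define F(S) = min_{T⊆V̄} G(S∪T) for S ⊆ V. Then the Lovász extension f of F satisfies f(x) = min_{x̄ ∈ ℝ^M} g(x, x̄) for ALL x ∈ ℝ^N (not only non-negative x), where g is the Lovász extension of G. -/
open scoped Classical
open MeasureTheory

/-- The Lovász extension of a set function `F` (with `F ∅ = 0`), defined equivalently to the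
sorted telescoping sum via the level-set integral formula. -/
noncomputable def lovasz {α : Type*} [Fintype α] (F : Set α → ℝ) (x : α → ℝ) : ℝ :=
  (⨅ i, x i) * F Set.univ +
    ∫ t in Set.Ioc (⨅ i, x i) (⨆ i, x i), F {i | t < x i}

/-- `F(S₁) + F(S₂) ≥ F(S₁ ∪ S₂) + F(S₁ ∩ S₂)`. -/
def Submodular {α : Type*} (F : Set α → ℝ) : Prop :=
  ∀ A B : Set α, F (A ∪ B) + F (A ∩ B) ≤ F A + F B

/-!
Since `F` vanishes at `∅` and `V` and `G` at `V ∪ V̄`, both `f(x)` and `g(x, x̄)` are integrals of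
the values on level sets over one common interval. For any `x̄` the level sets of `(x, x̄)` are
`S_t ∪ T_t`, with `S_t` the level sets of `x`, so `F(S_t) ≤ G(S_t ∪ T_t)` gives `f(x) ≤ g(x, x̄)`.
Conversely, by submodularity the least minimiser `τ(S)` of `T ↦ G(S ∪ T)` is monotone in `S`;
since the `S_t` form a chain, `t ↦ τ(S_t)` is the family of level sets of some `x̄` with values
between `min x` and `max x`, and for this `x̄` the two integrands agree.
-/

section Lovasz

variable {α : Type*} [Fintype α]

lemma lovasz_of_univ_eq_zero {F : Set α → ℝ} (hF : F Set.univ = 0) (x : α → ℝ) :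
    lovasz F x = ∫ t in Set.Ioc (⨅ i, x i) (⨆ i, x i), F {i | t < x i} := by
  rw [lovasz, hF, mul_zero, zero_add]

lemma lovasz_eq_setIntegral_Ioc_of_le {F : Set α → ℝ} (hU : F Set.univ = 0) (hE : F ∅ = 0)
    {x : α → ℝ} {c d : ℝ} (hc : c ≤ ⨅ i, x i) (hd : ⨆ i, x i ≤ d) :
    lovasz F x = ∫ t in Set.Ioc c d, F {i | t < x i} := by
  rw [lovasz_of_univ_eq_zero hU, ← integral_Icc_eq_integral_Ioc, ← integral_Icc_eq_integral_Ioc]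
  refine (setIntegral_eq_of_subset_of_forall_sdiff_eq_zero measurableSet_Icc
    (Set.Icc_subset_Icc hc hd) fun t ht => ?_).symm
  rcases not_and_or.mp ht.2 with hlt | hgt
  · have hlevel : {i | t < x i} = Set.univ := Set.eq_univ_of_forall fun i =>
      (not_le.mp hlt).trans_le (ciInf_le (Finite.bddBelow_range x) i)
    rw [hlevel, hU]
  · have hlevel : {i | t < x i} = ∅ := Set.eq_empty_of_forall_notMem fun i (hi : t < x i) =>
      hgt (hi.le.trans (le_ciSup (Finite.bddAbove_range x) i))
    rw [hlevel, hE]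

end Lovasz

section LevelSets

variable {γ : Type*} [Finite γ]

lemma measurable_apply_setOf_lt (H : Set γ → ℝ) (y : γ → ℝ) :
    Measurable fun t : ℝ => H {i | t < y i} :=
  (measurable_of_finite H).comp <|
    measurable_set_iff.2 fun _ => measurableSet_setOfPred.1 measurableSet_Iio

lemma integrableOn_apply_setOf_lt (H : Set γ → ℝ) (y : γ → ℝ) (c d : ℝ) :
    IntegrableOn (fun t : ℝ => H {i | t < y i}) (Set.Ioc c d) :=
  Measure.integrableOn_of_bounded (M := ⨆ S, |H S|) measure_Ioc_lt_top.ne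
    (measurable_apply_setOf_lt H y).aestronglyMeasurable
    (ae_of_all _ fun _ => le_ciSup (Finite.bddAbove_range fun S => |H S|) _)

lemma setOf_lt_sumElim {α β : Type*} (x : α → ℝ) (y : β → ℝ) (t : ℝ) :
    {k | t < Sum.elim x y k} = Sum.inl '' {i | t < x i} ∪ Sum.inr '' {j | t < y j} := by
  ext (_ | _) <;> simp

end LevelSets

section SumElim

variable {α β : Type*} [Finite α] [Finite β] [Nonempty α] (x : α → ℝ) (y : β → ℝ)

lemma iInf_sumElim_le : ⨅ k, Sum.elim x y k ≤ ⨅ i, x i :=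
  le_ciInf fun i => ciInf_le (Finite.bddBelow_range (Sum.elim x y)) (Sum.inl i)

lemma le_iSup_sumElim : ⨆ i, x i ≤ ⨆ k, Sum.elim x y k :=
  ciSup_le fun i => le_ciSup (Finite.bddAbove_range (Sum.elim x y)) (Sum.inl i)

variable {x y}

lemma iInf_sumElim_eq (h : ∀ j, ⨅ i, x i ≤ y j) : ⨅ k, Sum.elim x y k = ⨅ i, x i :=
  (iInf_sumElim_le x y).antisymm <| le_ciInf fun
    | .inl i => ciInf_le (Finite.bddBelow_range x) i
    | .inr j => h j

lemma iSup_sumElim_eq (h : ∀ j, y j ≤ ⨆ i, x i) : ⨆ k, Sum.elim x y k = ⨆ i, x i :=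
  (ciSup_le fun
    | .inl i => le_ciSup (Finite.bddAbove_range x) i
    | .inr j => h j).antisymm (le_iSup_sumElim x y)

end SumElim

section PartialMin

variable {α β : Type*} [Finite β] (G : Set (α ⊕ β) → ℝ)

noncomputable def partialMin (S : Set α) : ℝ := ⨅ T : Set β, G (Sum.inl '' S ∪ Sum.inr '' T)

lemma partialMin_le (S : Set α) (T : Set β) :
    partialMin G S ≤ G (Sum.inl '' S ∪ Sum.inr '' T) :=
  ciInf_le (Finite.bddBelow_range _) T

def minimizers (S : Set α) : Set (Set β) :=
  {T | G (Sum.inl '' S ∪ Sum.inr '' T) = partialMin G S}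

lemma minimizers_nonempty (S : Set α) : (minimizers G S).Nonempty :=
  exists_eq_ciInf_of_finite

variable {G}

/-- Submodularity applied to `S ∪ T` and `S' ∪ T'`: the union term is at least `F(S')`, so the
intersection term is at most `F(S)`. -/
lemma inter_mem_minimizers (hG : Submodular G) {S S' : Set α} (hS : S ⊆ S') {T T' : Set β}
    (hT : T ∈ minimizers G S) (hT' : T' ∈ minimizers G S') : T ∩ T' ∈ minimizers G S := by
  have hsub := hG (Sum.inl '' S ∪ Sum.inr '' T) (Sum.inl '' S' ∪ Sum.inr '' T')
  have hunion : (Sum.inl '' S ∪ Sum.inr '' T) ∪ (Sum.inl '' S' ∪ Sum.inr '' T')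
      = Sum.inl '' S' ∪ Sum.inr '' (T ∪ T') := by
    rw [← Set.union_eq_self_of_subset_left hS]
    ext (_ | _) <;> simp
  have hinter : (Sum.inl '' S ∪ Sum.inr '' T) ∩ (Sum.inl '' S' ∪ Sum.inr '' T')
      = Sum.inl '' S ∪ Sum.inr '' (T ∩ T') := by
    rw [← Set.inter_eq_self_of_subset_left hS]
    ext (_ | _) <;> simp
  rw [hunion, hinter, hT, hT'] at hsub
  have := partialMin_le G S' (T ∪ T')
  exact le_antisymm (by linarith) (partialMin_le G S _)

variable (G)

noncomputable def leastMinimizer (S : Set α) : Set β := sInf (minimizers G S)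

variable {G}

lemma leastMinimizer_mem (hG : Submodular G) (S : Set α) :
    leastMinimizer G S ∈ minimizers G S :=
  InfClosed.sInf_mem_of_nonempty (fun _ hT _ hT' => inter_mem_minimizers hG subset_rfl hT hT')
    (Set.toFinite _) (minimizers_nonempty G S) subset_rfl

lemma leastMinimizer_mono (hG : Submodular G) {S S' : Set α} (hS : S ⊆ S') :
    leastMinimizer G S ⊆ leastMinimizer G S' :=
  (sInf_le (inter_mem_minimizers hG hS (leastMinimizer_mem hG S)
    (leastMinimizer_mem hG S'))).trans Set.inter_subset_right

end PartialMin

section Extension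

variable {α β : Type*} [Fintype α] [Nonempty α]

noncomputable def minimizerExtension (G : Set (α ⊕ β) → ℝ) (x : α → ℝ) (j : β) : ℝ :=
  ⨆ i, if j ∈ leastMinimizer G {k | x i ≤ x k} then x i else ⨅ i, x i

variable {G : Set (α ⊕ β) → ℝ} {x : α → ℝ}

lemma iInf_le_minimizerExtension (j : β) : ⨅ i, x i ≤ minimizerExtension G x j := by
  refine le_ciSup_of_le (Finite.bddAbove_range _) (Classical.arbitrary α) ?_
  split_ifs
  exacts [ciInf_le (Finite.bddBelow_range x) _, le_rfl]

lemma minimizerExtension_le_iSup (j : β) : minimizerExtension G x j ≤ ⨆ i, x i :=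
  ciSup_le fun i => by
    split_ifs
    exacts [le_ciSup (Finite.bddAbove_range x) i,
      ciInf_le_ciSup (Finite.bddBelow_range x) (Finite.bddAbove_range x)]

lemma setOf_lt_minimizerExtension [Finite β] (hG : Submodular G) {t : ℝ} (ha : ⨅ i, x i ≤ t)
    (hb : t < ⨆ i, x i) :
    {j | t < minimizerExtension G x j} = leastMinimizer G {i | t < x i} := by
  ext j
  simp only [minimizerExtension, Set.mem_ofPred_eq, lt_ciSup_iff (Finite.bddAbove_range _),
    apply_ite (t < ·), not_lt.mpr ha, if_false_right]
  constructor
  · rintro ⟨i, hj, hti⟩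
    exact leastMinimizer_mono hG (fun k (hk : x i ≤ x k) => hti.trans_le hk) hj
  · intro hj
    obtain ⟨i, hti⟩ := (lt_ciSup_iff (Finite.bddAbove_range x)).mp hb
    obtain ⟨i₀, hi₀, hmin⟩ := (Finset.univ.filter fun k => t < x k).exists_min_image x
      ⟨i, Finset.mem_filter.mpr ⟨Finset.mem_univ i, hti⟩⟩
    have hi₀ : t < x i₀ := (Finset.mem_filter.mp hi₀).2
    have hlevel : {k | x i₀ ≤ x k} = {k | t < x k} := Set.ext fun k =>
      ⟨hi₀.trans_le, fun hk => hmin k (Finset.mem_filter.mpr ⟨Finset.mem_univ k, hk⟩)⟩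
    exact ⟨i₀, hlevel ▸ hj, hi₀⟩

end Extension

section Main

variable {α β : Type*} [Fintype α] [Fintype β] [Nonempty α] {G : Set (α ⊕ β) → ℝ}

lemma lovasz_partialMin_le (hGV : G Set.univ = 0) (hFU : partialMin G (Set.univ : Set α) = 0)
    (hFE : partialMin G (∅ : Set α) = 0) (x : α → ℝ) (y : β → ℝ) :
    lovasz (partialMin G) x ≤ lovasz G (Sum.elim x y) := by
  rw [lovasz_eq_setIntegral_Ioc_of_le hFU hFE (iInf_sumElim_le x y) (le_iSup_sumElim x y),
    lovasz_of_univ_eq_zero hGV]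
  refine setIntegral_mono_on (integrableOn_apply_setOf_lt _ x _ _)
    (integrableOn_apply_setOf_lt G _ _ _) measurableSet_Ioc fun t _ => ?_
  rw [setOf_lt_sumElim]
  exact partialMin_le G _ _

lemma lovasz_sumElim_minimizerExtension (hG : Submodular G) (hGV : G Set.univ = 0)
    (hFU : partialMin G (Set.univ : Set α) = 0) (x : α → ℝ) :
    lovasz G (Sum.elim x (minimizerExtension G x)) = lovasz (partialMin G) x := by
  rw [lovasz_of_univ_eq_zero hGV, lovasz_of_univ_eq_zero hFU,
    iInf_sumElim_eq iInf_le_minimizerExtension, iSup_sumElim_eq minimizerExtension_le_iSup,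
    integral_Ioc_eq_integral_Ioo, integral_Ioc_eq_integral_Ioo]
  refine setIntegral_congr_fun measurableSet_Ioo fun t ht => ?_
  rw [setOf_lt_sumElim, setOf_lt_minimizerExtension hG ht.1.le ht.2]
  exact leastMinimizer_mem hG _

end Main

theorem stmt_9_general {α β : Type*} [Fintype α] [Fintype β] [Nonempty α] (G : Set (α ⊕ β) → ℝ)
    (hG : Submodular G) (hGnn : ∀ S, 0 ≤ G S) (hGV : G Set.univ = 0)
    (hmin : (⨅ T : Set β, G (Sum.inr '' T)) = 0)
    (x : α → ℝ) :
    lovasz (fun S : Set α => ⨅ T : Set β, G (Sum.inl '' S ∪ Sum.inr '' T)) x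
      = ⨅ xb : β → ℝ, lovasz G (Sum.elim x xb) := by
  change lovasz (partialMin G) x = _
  have hFU : partialMin G (Set.univ : Set α) = 0 := le_antisymm
    (by simpa [hGV] using partialMin_le G Set.univ (Set.univ : Set β)) (le_ciInf fun _ => hGnn _)
  have hFE : partialMin G (∅ : Set α) = 0 := by simpa [partialMin] using hmin
  have hle := lovasz_partialMin_le hGV hFU hFE x
  refine le_antisymm (le_ciInf hle) ?_
  rw [← lovasz_sumElim_minimizerExtension hG hGV hFU x]
  exact ciInf_le ⟨_, Set.forall_mem_range.mpr hle⟩ _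

/-- If moreover `G` is non-negative with `G(V ∪ V̄) = 0`, then the Lovász extension of
`F(S) = min_{T ⊆ V̄} G(S ∪ T)` satisfies `f(x) = min_{x̄ ∈ ℝ^M} g(x, x̄)` for all `x ∈ ℝ^N`. -/
theorem stmt_9 {α β : Type*} [Fintype α] [Fintype β] [Nonempty α] (G : Set (α ⊕ β) → ℝ)
    (hG : Submodular G) (hGnn : ∀ S, 0 ≤ G S) (hG0 : G ∅ = 0) (hGV : G Set.univ = 0)
    (hmin : (⨅ T : Set β, G (Sum.inr '' T)) = 0)
    (x : α → ℝ) :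
    lovasz (fun S : Set α => ⨅ T : Set β, G (Sum.inl '' S ∪ Sum.inr '' T)) x
      = ⨅ xb : β → ℝ, lovasz G (Sum.elim x xb) :=
  stmt_9_general G hG hGnn hGV hmin x
end

section
/- The gradient of Ψ(α) = ‖f_A(α) − g̃‖_2^2 (with the substitution α_{vu} = 1 − α_{uv}) is Lipschitz continuous with Lipschitz constant at most L = 4 max_u Σ_v (A_{uv} + A_{vu})^2. -/
/-!
Under the substitution `α_{vu} = 1 - α_{uv}` the map `α ↦ f_A(α)` is affine: its linear part `T`
sends `α` to the weighted divergence `u ↦ Σ_v (A_{uv} + A_{vu}) α̃_{uv}` of the antisymmetric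
extension `α̃` of `α`. Hence `Ψ(α) = ‖T α + w‖²`, whose gradient `2 T* (T α + w)` is Lipschitz with
constant `2 ‖T* T‖ = 2 ‖T‖²`. Cauchy–Schwarz on each row of `T`, together with
`Σ_{u,v} α̃_{uv}² = 2 ‖α‖²`, gives `‖T‖² ≤ 2 max_u Σ_v (A_{uv} + A_{vu})²`.
-/

section AffineLeastSquares

variable {E F : Type*} [NormedAddCommGroup E] [InnerProductSpace ℝ E] [CompleteSpace E]
  [NormedAddCommGroup F] [InnerProductSpace ℝ F] [CompleteSpace F]

theorem hasGradientAt_norm_sq_affine (T : E →L[ℝ] F) (w : F) (x : E) :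
    HasGradientAt (fun y => ‖T y + w‖ ^ 2) ((2 : ℝ) • T.adjoint (T x + w)) x := by
  rw [hasGradientAt_iff_hasFDerivAt]
  refine (T.hasFDerivAt.add_const w).norm_sq.congr_fderiv ?_
  ext h
  simp [ContinuousLinearMap.adjoint_inner_left]

theorem norm_gradient_norm_sq_affine_sub_le (T : E →L[ℝ] F) (w : F) (a b : E) :
    ‖gradient (fun y => ‖T y + w‖ ^ 2) a - gradient (fun y => ‖T y + w‖ ^ 2) b‖
      ≤ 2 * ‖T‖ ^ 2 * ‖a - b‖ := by
  rw [(hasGradientAt_norm_sq_affine T w a).gradient, (hasGradientAt_norm_sq_affine T w b).gradient,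
    ← smul_sub, ← map_sub, add_sub_add_right_eq_sub, ← map_sub, norm_smul, Real.norm_two]
  calc 2 * ‖T.adjoint (T (a - b))‖ = 2 * ‖(T.adjoint ∘L T) (a - b)‖ := rfl
    _ ≤ 2 * (‖T.adjoint ∘L T‖ * ‖a - b‖) := by gcongr; exact ContinuousLinearMap.le_opNorm _ _
    _ = 2 * ‖T‖ ^ 2 * ‖a - b‖ := by rw [ContinuousLinearMap.norm_adjoint_comp_self]; ring

end AffineLeastSquares

section EdgeFunctions

variable {ι : Type*} [LinearOrder ι]

noncomputable def antisymmExt : EuclideanSpace ℝ {p : ι × ι // p.1 < p.2} →ₗ[ℝ] ι → ι → ℝ where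
  toFun x u v := if h : u < v then x ⟨(u, v), h⟩ else if h : v < u then -x ⟨(v, u), h⟩ else 0
  map_add' x y := by
    ext u v
    by_cases h : u < v <;> by_cases h' : v < u <;> simp [h, h', add_comm]
  map_smul' c x := by
    ext u v
    by_cases h : u < v <;> by_cases h' : v < u <;> simp [h, h']

theorem antisymmExt_swap (x : EuclideanSpace ℝ {p : ι × ι // p.1 < p.2}) (u v : ι) :
    antisymmExt x v u = -antisymmExt x u v := by
  simp only [antisymmExt, LinearMap.coe_mk, AddHom.coe_mk]
  rcases lt_trichotomy u v with h | rfl | h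
  · simp [h, h.not_gt]
  · simp
  · simp [h, h.not_gt]

noncomputable def orientedExt (a : EuclideanSpace ℝ {p : ι × ι // p.1 < p.2}) (u v : ι) : ℝ :=
  if h : u < v then a ⟨(u, v), h⟩ else if h : v < u then 1 - a ⟨(v, u), h⟩ else 1 / 2

theorem orientedExt_eq_add_antisymmExt (a : EuclideanSpace ℝ {p : ι × ι // p.1 < p.2})
    (u v : ι) : orientedExt a u v = orientedExt 0 u v + antisymmExt a u v := by
  simp only [orientedExt, antisymmExt, LinearMap.coe_mk, AddHom.coe_mk]
  split_ifs <;> simp [sub_eq_add_neg]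

variable [Fintype ι]

theorem sum_sum_dite_lt (f : {p : ι × ι // p.1 < p.2} → ℝ) :
    ∑ u, ∑ v, (if h : u < v then f ⟨(u, v), h⟩ else 0) = ∑ e, f e := by
  rw [← Fintype.sum_prod_type' (fun u v => if h : u < v then f ⟨(u, v), h⟩ else 0),
    Finset.sum_dite, Finset.sum_const_zero, add_zero]
  exact Fintype.sum_equiv (Equiv.subtypeEquivRight (by simp)) _ _ fun _ => rfl

theorem sum_sum_antisymmExt_sq (x : EuclideanSpace ℝ {p : ι × ι // p.1 < p.2}) :
    ∑ u, ∑ v, antisymmExt x u v ^ 2 = 2 * ‖x‖ ^ 2 := by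
  have hsq : ∀ u v, antisymmExt x u v ^ 2 = (if h : u < v then x ⟨(u, v), h⟩ ^ 2 else 0)
      + (if h : v < u then x ⟨(v, u), h⟩ ^ 2 else 0) := by
    intro u v
    simp only [antisymmExt, LinearMap.coe_mk, AddHom.coe_mk]
    rcases lt_trichotomy u v with h | rfl | h
    · simp [h, h.not_gt]
    · simp
    · simp [h, h.not_gt]
  simp only [hsq, Finset.sum_add_distrib]
  rw [Finset.sum_comm (f := fun u v => if h : v < u then x ⟨(v, u), h⟩ ^ 2 else 0),
    sum_sum_dite_lt (fun e => x e ^ 2), EuclideanSpace.norm_sq_eq]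
  simp only [Real.norm_eq_abs, sq_abs]
  ring

noncomputable def weightedDivergence (W : ι → ι → ℝ) :
    EuclideanSpace ℝ {p : ι × ι // p.1 < p.2} →L[ℝ] EuclideanSpace ℝ ι :=
  LinearMap.toContinuousLinearMap
    { toFun := fun x => WithLp.toLp 2 fun u => ∑ v, W u v * antisymmExt x u v
      map_add' := fun x y => by ext u; simp [mul_add, Finset.sum_add_distrib]
      map_smul' := fun c x => by ext u; simp [Finset.mul_sum, mul_left_comm] }

theorem weightedDivergence_apply (W : ι → ι → ℝ) (x : EuclideanSpace ℝ {p : ι × ι // p.1 < p.2})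
    (u : ι) : weightedDivergence W x u = ∑ v, W u v * antisymmExt x u v :=
  rfl

theorem norm_weightedDivergence_apply_sq_le (W : ι → ι → ℝ)
    (x : EuclideanSpace ℝ {p : ι × ι // p.1 < p.2}) :
    ‖weightedDivergence W x‖ ^ 2 ≤ 2 * (⨆ u, ∑ v, W u v ^ 2) * ‖x‖ ^ 2 := by
  have hrow : ∀ u, (∑ v, W u v * antisymmExt x u v) ^ 2
      ≤ (⨆ u, ∑ v, W u v ^ 2) * ∑ v, antisymmExt x u v ^ 2 := fun u =>
    (Finset.sum_mul_sq_le_sq_mul_sq _ _ _).trans <| by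
      gcongr
      exact le_ciSup (Finite.bddAbove_range fun u => ∑ v, W u v ^ 2) u
  calc ‖weightedDivergence W x‖ ^ 2 = ∑ u, (∑ v, W u v * antisymmExt x u v) ^ 2 := by
        simp only [EuclideanSpace.norm_sq_eq, Real.norm_eq_abs, sq_abs, weightedDivergence_apply]
    _ ≤ ∑ u, (⨆ u, ∑ v, W u v ^ 2) * ∑ v, antisymmExt x u v ^ 2 :=
        Finset.sum_le_sum fun u _ => hrow u
    _ = 2 * (⨆ u, ∑ v, W u v ^ 2) * ‖x‖ ^ 2 := by
        rw [← Finset.mul_sum, sum_sum_antisymmExt_sq]; ring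

theorem norm_weightedDivergence_sq_le (W : ι → ι → ℝ) :
    ‖weightedDivergence W‖ ^ 2 ≤ 2 * ⨆ u, ∑ v, W u v ^ 2 := by
  have hM : 0 ≤ 2 * ⨆ u, ∑ v, W u v ^ 2 :=
    mul_nonneg zero_le_two (Real.iSup_nonneg fun u => by positivity)
  refine (Real.le_sqrt (norm_nonneg _) hM).1 <|
    (weightedDivergence W).opNorm_le_bound (Real.sqrt_nonneg _) fun x => ?_
  rw [← Real.sqrt_sq (norm_nonneg x), ← Real.sqrt_mul hM]
  exact (Real.le_sqrt (norm_nonneg _) (by positivity)).2 (norm_weightedDivergence_apply_sq_le W x)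

/-- The paper's `f_A(α)`. -/
noncomputable def netFlow (A : ι → ι → ℝ) (a : EuclideanSpace ℝ {p : ι × ι // p.1 < p.2})
    (u : ι) : ℝ :=
  ∑ v, (A u v * orientedExt a u v - A v u * orientedExt a v u)

theorem netFlow_eq_weightedDivergence_add (A : ι → ι → ℝ)
    (a : EuclideanSpace ℝ {p : ι × ι // p.1 < p.2}) (u : ι) :
    netFlow A a u = weightedDivergence (fun u v => A u v + A v u) a u + netFlow A 0 u := by
  simp only [netFlow, weightedDivergence_apply, ← Finset.sum_add_distrib]
  refine Finset.sum_congr rfl fun v _ => ?_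
  rw [orientedExt_eq_add_antisymmExt a u v, orientedExt_eq_add_antisymmExt a v u,
    antisymmExt_swap]
  ring

end EdgeFunctions

theorem stmt_18_general {n : ℕ} (A : Fin n → Fin n → ℝ) (gt : Fin n → ℝ) :
    let ext : EuclideanSpace ℝ {p : Fin n × Fin n // p.1 < p.2} → Fin n → Fin n → ℝ :=
      fun a u v =>
        if h : u < v then a ⟨(u, v), h⟩
        else if h : v < u then 1 - a ⟨(v, u), h⟩ else 1 / 2
    let Ψ : EuclideanSpace ℝ {p : Fin n × Fin n // p.1 < p.2} → ℝ :=
      fun a => ∑ u, ((∑ v, (A u v * ext a u v - A v u * ext a v u)) - gt u) ^ 2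
    let L : ℝ := 4 * ⨆ u : Fin n, ∑ v, (A u v + A v u) ^ 2
    ∀ a b, ‖gradient Ψ a - gradient Ψ b‖ ≤ L * ‖a - b‖ := by
  intro ext Ψ L a b
  set w : EuclideanSpace ℝ (Fin n) := WithLp.toLp 2 fun u => netFlow A 0 u - gt u
  have hΨ : Ψ = fun y => ‖weightedDivergence (fun u v => A u v + A v u) y + w‖ ^ 2 := by
    funext y
    rw [EuclideanSpace.norm_sq_eq]
    refine Finset.sum_congr rfl fun u _ => ?_
    rw [Real.norm_eq_abs, sq_abs]
    change (netFlow A y u - gt u) ^ 2 = _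
    rw [netFlow_eq_weightedDivergence_add]
    simp [w, add_sub_assoc]
  calc ‖gradient Ψ a - gradient Ψ b‖
        ≤ 2 * ‖weightedDivergence (fun u v => A u v + A v u)‖ ^ 2 * ‖a - b‖ :=
        hΨ ▸ norm_gradient_norm_sq_affine_sub_le _ w a b
    _ ≤ L * ‖a - b‖ := by
        gcongr
        linarith [norm_weightedDivergence_sq_le fun u v => A u v + A v u]

/-- The gradient of `Ψ(α) = ‖f_A(α) − g̃‖₂²` (with the substitution `α_{vu} = 1 − α_{uv}`, the
independent variables being `α_{uv}` for `u < v`) is Lipschitz continuous with constant at most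
`L = 4 · max_u Σ_v (A_{uv} + A_{vu})²`. -/
theorem stmt_18 {n : ℕ} [Nonempty (Fin n)] (A : Fin n → Fin n → ℝ)
    (hA : ∀ u v, 0 ≤ A u v) (gt : Fin n → ℝ) :
    let ext : EuclideanSpace ℝ {p : Fin n × Fin n // p.1 < p.2} → Fin n → Fin n → ℝ :=
      fun a u v =>
        if h : u < v then a ⟨(u, v), h⟩
        else if h : v < u then 1 - a ⟨(v, u), h⟩ else 1 / 2
    let Ψ : EuclideanSpace ℝ {p : Fin n × Fin n // p.1 < p.2} → ℝ :=
      fun a => ∑ u, ((∑ v, (A u v * ext a u v - A v u * ext a v u)) - gt u) ^ 2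
    let L : ℝ := 4 * ⨆ u : Fin n, ∑ v, (A u v + A v u) ^ 2
    ∀ a b, ‖gradient Ψ a - gradient Ψ b‖ ≤ L * ‖a - b‖ :=
  stmt_18_general A gt
end
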